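/- arXiv:2509.03992 — 2 statements merged into one kernel-verified Lean document; each statement's English description precedes it below -/
import Mathlib

section
/- Let γ ↦ A^γ be a C^1 family of M×M real matrices, γ ↦ v^γ a C^1 family of vectors in R^M, and w ∈ R^M fixed; write A = A^0, v = v^0, δA = (d/dγ)A^γ|_{γ=0}, δv = (d/dγ)v^γ|_{γ=0}. Then, as t → 0⁺, the γ-derivative at γ = 0 of log det(I + t A^γ + √t · w (v^γ)^T) equals √t ⟨δv, w⟩ + t ( tr(δA) − ⟨v, w⟩⟨δv, w⟩ ) + o(t). -/
/-!
Put `s = √t`. The matrix is `1 + s • E s` with `E s = s • A 0 + w (v 0)ᵀ`, and its γ-derivative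
at `0` is `s • H s` with `H s = s • δA + w δvᵀ`. By Jacobi's formula the γ-derivative of the
log-determinant is `tr ((1 + s E)⁻¹ (s H))`, and the resolvent identity
`(1 + X)⁻¹ = 1 - X + (1 + X)⁻¹ X²` turns this into `s tr H - s² tr (E H) + O(s³)`.
Since `tr (H s) = s tr δA + ⟨δv, w⟩` and `tr (E s H s) → tr (E 0 H 0) = ⟨v, w⟩⟨δv, w⟩`, this is
the claimed expansion up to `o(s²) = o(t)`.
-/

open Matrix Filter Topology

attribute [local instance] Matrix.frobeniusNormedAddCommGroup Matrix.frobeniusNormedSpace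

namespace Matrix

variable {𝕜 : Type*} [NontriviallyNormedField 𝕜] {n : Type*} [Fintype n]

theorem hasDerivAt_apply {m : Type*} [Fintype m] {F : 𝕜 → Matrix m n 𝕜} {F' : Matrix m n 𝕜}
    {x : 𝕜} (hF : HasDerivAt F F' x) (i : m) (j : n) :
    HasDerivAt (fun γ => F γ i j) (F' i j) x :=
  ((ContinuousLinearMap.proj j).comp
    (ContinuousLinearMap.proj i : Matrix m n 𝕜 →L[𝕜] n → 𝕜)).hasFDerivAt.comp_hasDerivAt x hF

variable [DecidableEq n]

theorem det_updateRow_eq_sum_mul_adjugate {R : Type*} [CommRing R] (A : Matrix n n R) (i : n)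
    (r : n → R) : (A.updateRow i r).det = ∑ j, r j * adjugate A j i := by
  rw [← det_transpose, ← updateCol_transpose, ← cramer_apply, cramer_eq_adjugate_mulVec,
    ← adjugate_transpose, mulVec, dotProduct]
  simp only [transpose_apply, mul_comm]

theorem inv_one_add_eq {R : Type*} [CommRing R] {E : Matrix n n R} (h : IsUnit (1 + E).det) :
    (1 + E)⁻¹ = 1 - E + (1 + E)⁻¹ * (E * E) :=
  calc (1 + E)⁻¹ = (1 + E)⁻¹ * ((1 + E) * (1 - E) + E * E) := by noncomm_ring
    _ = (1 + E)⁻¹ * (1 + E) * (1 - E) + (1 + E)⁻¹ * (E * E) := by noncomm_ring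
    _ = 1 - E + (1 + E)⁻¹ * (E * E) := by rw [nonsing_inv_mul _ h, one_mul]

noncomputable def detRowContinuousMultilinear :
    ContinuousMultilinearMap 𝕜 (fun _ : n => n → 𝕜) 𝕜 where
  toMultilinearMap := detRowAlternating.toMultilinearMap
  cont := continuous_id.matrix_det

theorem hasDerivAt_det {F : 𝕜 → Matrix n n 𝕜} {F' : Matrix n n 𝕜} {x : 𝕜}
    (hF : ∀ i j, HasDerivAt (fun γ => F γ i j) (F' i j) x) :
    HasDerivAt (fun γ => (F γ).det) (adjugate (F x) * F').trace x := by
  have hrows : HasDerivAt (fun γ i => F γ i) (fun i => F' i) x :=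
    hasDerivAt_pi.2 fun i => hasDerivAt_pi.2 (hF i)
  refine ((detRowContinuousMultilinear.hasFDerivAt fun i => F x i).comp_hasDerivAt x
    hrows).congr_deriv ?_
  rw [ContinuousMultilinearMap.linearDeriv_apply]
  change ∑ i, ((F x).updateRow i (F' i)).det = _
  simp only [det_updateRow_eq_sum_mul_adjugate, trace, diag_apply, mul_apply]
  rw [Finset.sum_comm]
  simp only [mul_comm]

theorem hasDerivAt_log_det {F : ℝ → Matrix n n ℝ} {F' : Matrix n n ℝ} {x : ℝ}
    (hF : ∀ i j, HasDerivAt (fun γ => F γ i j) (F' i j) x) (hdet : (F x).det ≠ 0) :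
    HasDerivAt (fun γ => Real.log (F γ).det) ((F x)⁻¹ * F').trace x := by
  refine ((hasDerivAt_det hF).log hdet).congr_deriv ?_
  rw [inv_def, smul_mul, trace_smul, Ring.inverse_eq_inv', smul_eq_mul, div_eq_inv_mul]

theorem eventually_isUnit_det_one_add_smul {E : 𝕜 → Matrix n n 𝕜} (hE : ContinuousAt E 0) :
    ∀ᶠ s in 𝓝 0, IsUnit (1 + s • E s).det := by
  have hcont : ContinuousAt (fun s => (1 + s • E s).det) 0 :=
    continuous_id.matrix_det.continuousAt.comp (continuousAt_const.add (continuousAt_id.smul hE))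
  have h1 : (1 + (0 : 𝕜) • E 0).det = 1 := by simp
  filter_upwards [hcont.eventually_ne (h1 ▸ one_ne_zero)] with s hs using isUnit_iff_ne_zero.2 hs

theorem tendsto_trace_inv_one_add_smul_mul_smul {E H : 𝕜 → Matrix n n 𝕜}
    (hE : ContinuousAt E 0) (hH : ContinuousAt H 0) :
    Tendsto (fun s => (((1 + s • E s)⁻¹ * (s • H s)).trace - s * (H s).trace) / s ^ 2)
      (𝓝[≠] 0) (𝓝 (-(E 0 * H 0).trace)) := by
  set q : 𝕜 → 𝕜 := fun s =>
    -(E s * H s).trace + s * ((1 + s • E s)⁻¹ * (E s * (E s * H s))).trace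
  have hinv : ContinuousAt (fun s => (1 + s • E s)⁻¹) 0 := by
    refine ContinuousAt.comp (g := Inv.inv) ?_ (continuousAt_const.add (continuousAt_id.smul hE))
    refine continuousAt_matrix_inv _ ?_
    simp [Ring.inverse_eq_inv']
  have hq : ContinuousAt q 0 := by fun_prop
  have hq0 : q 0 = -(E 0 * H 0).trace := by simp [q]
  refine (hq0 ▸ hq.tendsto.mono_left nhdsWithin_le_nhds).congr' ?_
  filter_upwards [nhdsWithin_le_nhds (eventually_isUnit_det_one_add_smul hE),
    self_mem_nhdsWithin] with s hunit (hs : s ≠ 0)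
  rw [inv_one_add_eq hunit]
  simp only [q, Matrix.add_mul, Matrix.sub_mul, Matrix.one_mul, trace_add, trace_sub,
    Matrix.mul_smul, Matrix.smul_mul, Matrix.mul_assoc, trace_smul, smul_eq_mul]
  field_simp
  ring

theorem hasDerivAt_log_det_one_add_smul_add_smul_vecMulVec {A : ℝ → Matrix n n ℝ}
    {A' : Matrix n n ℝ} {v : ℝ → n → ℝ} {v' : n → ℝ} {x : ℝ} (hA : HasDerivAt A A' x)
    (hv : HasDerivAt v v' x) (w : n → ℝ) (a b : ℝ)
    (hdet : (1 + a • A x + b • vecMulVec w (v x)).det ≠ 0) :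
    HasDerivAt (fun γ => Real.log (1 + a • A γ + b • vecMulVec w (v γ)).det)
      ((1 + a • A x + b • vecMulVec w (v x))⁻¹ * (a • A' + b • vecMulVec w v')).trace x := by
  refine hasDerivAt_log_det (fun i j => ?_) hdet
  simp only [add_apply, smul_apply, vecMulVec_apply, smul_eq_mul]
  exact (((hasDerivAt_apply hA i j).const_mul a).const_add _).add
    (((hasDerivAt_pi.1 hv j).const_mul (w i)).const_mul b)

end Matrix

theorem Real.tendsto_sqrt_nhdsGT_zero : Tendsto Real.sqrt (𝓝[>] 0) (𝓝[≠] 0) :=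
  tendsto_nhdsWithin_iff.2 ⟨(Real.continuous_sqrt.tendsto' 0 0 Real.sqrt_zero).mono_left
    nhdsWithin_le_nhds, eventually_nhdsWithin_of_forall fun _ ht => (Real.sqrt_pos.2 ht).ne'⟩

/-- the γ-derivative at γ = 0 of `log det(I + t A^γ + √t·w (v^γ)ᵀ)` equals
`√t ⟨δv, w⟩ + t (tr(δA) − ⟨v, w⟩⟨δv, w⟩) + o(t)` as `t → 0⁺`,
where `δA = (d/dγ)A^γ|₀` and `δv = (d/dγ)v^γ|₀`. -/
theorem deriv_logdet_euler_step_expansion (M : ℕ)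
    (A : ℝ → Matrix (Fin M) (Fin M) ℝ) (v : ℝ → Fin M → ℝ) (w : Fin M → ℝ)
    (hA : ContDiff ℝ 1 A) (hv : ContDiff ℝ 1 v) :
    Tendsto (fun t : ℝ =>
      (deriv (fun γ : ℝ =>
          Real.log (((1 : Matrix (Fin M) (Fin M) ℝ) + t • A γ
            + Real.sqrt t • vecMulVec w (v γ)).det)) 0
        - (Real.sqrt t * (deriv v 0 ⬝ᵥ w)
            + t * ((deriv A 0).trace - (v 0 ⬝ᵥ w) * (deriv v 0 ⬝ᵥ w)))) / t)
      (nhdsWithin 0 (Set.Ioi 0)) (nhds 0) := by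
  -- The ascriptions make `deriv` elaborate with the same instances as in `H` below.
  have hA' : HasDerivAt A (deriv A 0) 0 := (hA.differentiable one_ne_zero 0).hasDerivAt
  have hv' : HasDerivAt v (deriv v 0) 0 := (hv.differentiable one_ne_zero 0).hasDerivAt
  set E : ℝ → Matrix (Fin M) (Fin M) ℝ := fun s => s • A 0 + vecMulVec w (v 0)
  set H : ℝ → Matrix (Fin M) (Fin M) ℝ := fun s => s • deriv A 0 + vecMulVec w (deriv v 0)
  have hunit := Real.tendsto_sqrt_nhdsGT_zero.eventually
    (nhdsWithin_le_nhds (eventually_isUnit_det_one_add_smul (E := E) (by fun_prop)))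
  have hEH : (E 0 * H 0).trace = (v 0 ⬝ᵥ w) * (deriv v 0 ⬝ᵥ w) := by
    simp [E, H, vecMulVec_mul_vecMulVec, dotProduct_comm w]
  have hlim := ((tendsto_trace_inv_one_add_smul_mul_smul (E := E) (H := H) (by fun_prop)
    (by fun_prop)).comp Real.tendsto_sqrt_nhdsGT_zero).add_const (E 0 * H 0).trace
  rw [neg_add_cancel] at hlim
  refine hlim.congr' ?_
  filter_upwards [self_mem_nhdsWithin, hunit] with t (ht : 0 < t) hdet
  obtain ⟨s, hs, rfl⟩ : ∃ s > 0, s ^ 2 = t := ⟨√t, Real.sqrt_pos.2 ht, Real.sq_sqrt ht.le⟩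
  simp only [Function.comp_apply, Real.sqrt_sq hs.le] at hdet ⊢
  have hF : 1 + s ^ 2 • A 0 + s • vecMulVec w (v 0) = 1 + s • E s := by
    simp only [E, smul_add, smul_smul, ← sq, add_assoc]
  have hF' : s ^ 2 • deriv A 0 + s • vecMulVec w (deriv v 0) = s • H s := by
    simp only [H, smul_add, smul_smul, ← sq]
  have hderiv := (hasDerivAt_log_det_one_add_smul_add_smul_vecMulVec hA' hv' w _ _
    (hF ▸ hdet.ne_zero)).deriv
  rw [hderiv, hF, hF', hEH]
  generalize ((1 + s • E s)⁻¹ * (s • H s)).trace = D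
  simp only [H, trace_add, trace_smul, trace_vecMulVec, smul_eq_mul, dotProduct_comm w]
  field_simp
  ring
end

section
/- Let F : R^M → R^M be C^2, σ : R^M → R be C^3, fix x ∈ R^M, w ∈ R^M, p ∈ R^M, c ∈ R, and let A = DF(x), v = ∇σ(x). Then, as t → 0⁺, the inner product of the gradient of the log Jacobian determinant with the first-order response of the initial condition satisfies ⟨ ∇_x log det(I + t A + √t w v^T), −(I + t A + √t w v^T)^{-1}(t p + √t c w) ⟩ = −t c ⟨∇²σ(x) w, w⟩ + o(t). -/
/-!
By Jacobi's formula, `∂ⱼ log det N = tr (N⁻¹ ∂ⱼN)`, and for `N = I + t DF + √t w (∇σ)ᵀ` the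
derivative is `∂ⱼN = t ∂ⱼDF + √t w (∂ⱼ∇σ)ᵀ`. Hence, with `H = D∇σ(x)`, the gradient of
`log det N` is `t β + √t Hᵀ N⁻¹ w` for a bounded `β`, while the response is
`-√t N⁻¹ (√t p + c w)`. Their inner product divided by `t` is
`-(√t β + Hᵀ N⁻¹ w) ⬝ N⁻¹ (√t p + c w)`, which tends to `-(Hᵀ w) ⬝ (c w) = -c ⟨H w, w⟩`
because `N → I` as `t → 0⁺`.
-/

open Matrix Filter Topology

/-- the gradient (column vector of partial derivatives) of a scalar function on `ℝ^M` -/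
noncomputable def grad {M : ℕ} (φ : (Fin M → ℝ) → ℝ) (x : Fin M → ℝ) : Fin M → ℝ :=
  fun j => fderiv ℝ φ x (Pi.single j 1)

/-- the Jacobian matrix of a map `ℝ^M → ℝ^M` -/
noncomputable def jac {M : ℕ} (F : (Fin M → ℝ) → (Fin M → ℝ)) (x : Fin M → ℝ) :
    Matrix (Fin M) (Fin M) ℝ :=
  Matrix.of fun i j => fderiv ℝ F x (Pi.single j 1) i

theorem Matrix.det_updateRow_eq_sum_adjugate {n R : Type*} [Fintype n] [DecidableEq n]
    [CommRing R] (A : Matrix n n R) (i : n) (b : n → R) :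
    (A.updateRow i b).det = ∑ k, b k * A.adjugate k i := by
  rw [← cramer_transpose_apply, cramer_eq_adjugate_mulVec, ← adjugate_transpose]
  simp [mulVec, dotProduct, mul_comm]

theorem ContinuousAt.matrix_inv {n 𝕜 X : Type*} [Fintype n] [DecidableEq n] [NormedField 𝕜]
    [TopologicalSpace X] {N : X → Matrix n n 𝕜} {x : X} (hN : ContinuousAt N x)
    (hdet : (N x).det ≠ 0) : ContinuousAt (fun y => (N y)⁻¹) x := by
  refine (continuousAt_matrix_inv (N x) ?_).comp hN
  rw [Ring.inverse_eq_inv']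
  exact continuousAt_inv₀ hdet

section Derivatives

variable {𝕜 E n : Type*} [NontriviallyNormedField 𝕜] [NormedAddCommGroup E] [NormedSpace 𝕜 E]
  [Fintype n] [DecidableEq n]

/-- Jacobi's formula. -/
theorem hasFDerivAt_det {G : E → Matrix n n 𝕜} {G' : n → n → E →L[𝕜] 𝕜} {x : E}
    (hG : ∀ i k, HasFDerivAt (fun y => G y i k) (G' i k) x) :
    HasFDerivAt (fun y => (G y).det) (∑ i, ∑ k, (G x).adjugate k i • G' i k) x := by
  -- the determinant is multilinear in the rows, so its derivative replaces one row at a time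
  let detCML : ContinuousMultilinearMap 𝕜 (fun _ : n => n → 𝕜) 𝕜 :=
    ⟨detRowAlternating.toMultilinearMap, continuous_id.matrix_det⟩
  have hGpi : HasFDerivAt (fun y => (G y : n → n → 𝕜))
      (ContinuousLinearMap.pi fun i => ContinuousLinearMap.pi fun k => G' i k) x :=
    hasFDerivAt_pi.2 fun i => hasFDerivAt_pi.2 fun k => hG i k
  refine ((detCML.hasFDerivAt (G x)).comp x hGpi).congr_fderiv ?_
  ext h
  erw [ContinuousLinearMap.comp_apply, ContinuousMultilinearMap.linearDeriv_apply]
  simp only [_root_.sum_apply, _root_.smul_apply, smul_eq_mul]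
  refine Finset.sum_congr rfl fun i _ => ?_
  change ((G x).updateRow i _).det = _
  simp [Matrix.det_updateRow_eq_sum_adjugate, mul_comm]

theorem ContDiff.differentiableAt_fderiv_apply {F : Type*} [NormedAddCommGroup F]
    [NormedSpace 𝕜 F] {f : E → F} (hf : ContDiff 𝕜 2 f) (v x : E) :
    DifferentiableAt 𝕜 (fun y => fderiv 𝕜 f y v) x :=
  ((hf.fderiv_right (m := 1) le_rfl).differentiable one_ne_zero x).clm_apply
    (differentiableAt_const v)

end Derivatives

theorem hasFDerivAt_log_det {E n : Type*} [NormedAddCommGroup E] [NormedSpace ℝ E] [Fintype n]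
    [DecidableEq n] {G : E → Matrix n n ℝ} {G' : n → n → E →L[ℝ] ℝ} {x : E}
    (hG : ∀ i k, HasFDerivAt (fun y => G y i k) (G' i k) x)
    (hdet : (G x).det ≠ 0) :
    HasFDerivAt (fun y => Real.log (G y).det) (∑ i, ∑ k, (G x)⁻¹ k i • G' i k) x := by
  refine ((Real.hasDerivAt_log hdet).comp_hasFDerivAt x (hasFDerivAt_det hG)).congr_fderiv ?_
  simp [inv_def, Finset.smul_sum, smul_smul]

section Limit

variable {n : Type*} [Fintype n]

theorem div_sq_eq_sub_smul_add_mulVec_dotProduct {s : ℝ} (hs : s ≠ 0) (P H : Matrix n n ℝ)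
    (β p w : n → ℝ) (c K : ℝ) :
    ((s ^ 2 • β + s • (Hᵀ *ᵥ (P *ᵥ w))) ⬝ᵥ -(P *ᵥ (s ^ 2 • p + (s * c) • w)) + s ^ 2 * c * K)
      / s ^ 2 = c * K - (s • β + Hᵀ *ᵥ (P *ᵥ w)) ⬝ᵥ (P *ᵥ (s • p + c • w)) := by
  have hgrad : s ^ 2 • β + s • (Hᵀ *ᵥ (P *ᵥ w)) = s • (s • β + Hᵀ *ᵥ (P *ᵥ w)) := by
    rw [smul_add, smul_smul, sq]
  have hresp : s ^ 2 • p + (s * c) • w = s • (s • p + c • w) := by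
    rw [smul_add, smul_smul, smul_smul, sq]
  rw [hgrad, hresp, mulVec_smul, smul_dotProduct, dotProduct_neg, dotProduct_smul]
  field_simp
  simp only [smul_eq_mul]
  ring

theorem tendsto_smul_add_mulVec_dotProduct [DecidableEq n] {N : ℝ → Matrix n n ℝ}
    (hN : ContinuousAt N 0) (hN0 : N 0 = 1) (B : n → Matrix n n ℝ) (H : Matrix n n ℝ)
    (p w : n → ℝ) (c : ℝ) :
    Tendsto (fun s => (s • (fun j => trace ((N s)⁻¹ * B j)) + Hᵀ *ᵥ ((N s)⁻¹ *ᵥ w)) ⬝ᵥ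
      ((N s)⁻¹ *ᵥ (s • p + c • w))) (𝓝 0) (𝓝 (c * (H *ᵥ w ⬝ᵥ w))) := by
  let Φ : ℝ × Matrix n n ℝ → ℝ := fun q =>
    (q.1 • (fun j => trace (q.2 * B j)) + Hᵀ *ᵥ (q.2 *ᵥ w)) ⬝ᵥ (q.2 *ᵥ (q.1 • p + c • w))
  have hΦ : Continuous Φ := by fun_prop
  have hΦ0 : Φ (0, (N 0)⁻¹) = c * (H *ᵥ w ⬝ᵥ w) := by
    simp only [Φ, hN0, inv_one, zero_smul, zero_add, one_mulVec, dotProduct_smul, smul_eq_mul,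
      mulVec_transpose, ← dotProduct_mulVec, dotProduct_comm w]
  have hlim : Tendsto (fun s => Φ (s, (N s)⁻¹)) (𝓝 0) (𝓝 (Φ (0, (N 0)⁻¹))) :=
    (hΦ.tendsto _).comp (tendsto_id.prodMk_nhds (hN.matrix_inv (by simp [hN0])))
  rwa [hΦ0] at hlim

end Limit

section Gradient

variable {M : ℕ}

theorem differentiableAt_jac_apply {F : (Fin M → ℝ) → (Fin M → ℝ)} (hF : ContDiff ℝ 2 F)
    (x : Fin M → ℝ) (i k : Fin M) : DifferentiableAt ℝ (fun y => jac F y i k) x :=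
  differentiableAt_pi.1 (hF.differentiableAt_fderiv_apply _ x) i

theorem differentiableAt_grad {σ : (Fin M → ℝ) → ℝ} (hσ : ContDiff ℝ 2 σ) (x : Fin M → ℝ) :
    DifferentiableAt ℝ (grad σ) x :=
  differentiableAt_pi.2 fun _ => hσ.differentiableAt_fderiv_apply _ x

theorem jac_apply_eq_grad {F : (Fin M → ℝ) → (Fin M → ℝ)} {x : Fin M → ℝ}
    (hF : DifferentiableAt ℝ F x) (i j : Fin M) : jac F x i j = grad (fun y => F y i) x j := by
  simp [jac, grad, (hasFDerivAt_pi'.1 hF.hasFDerivAt i).fderiv]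

theorem grad_log_det {n : Type*} [Fintype n] [DecidableEq n] {G : (Fin M → ℝ) → Matrix n n ℝ}
    {x : Fin M → ℝ} (hG : ∀ i k, DifferentiableAt ℝ (fun y => G y i k) x)
    (hdet : (G x).det ≠ 0) :
    grad (fun y => Real.log (G y).det) x =
      fun j => trace ((G x)⁻¹ * of fun i k => grad (fun y => G y i k) x j) := by
  funext j
  rw [grad, (hasFDerivAt_log_det (fun i k => (hG i k).hasFDerivAt) hdet).fderiv]
  simp only [FunLike.coe_sum, FunLike.coe_smul, Finset.sum_apply, Pi.smul_apply, smul_eq_mul,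
    trace, diag, mul_apply, of_apply, grad]
  exact Finset.sum_comm

noncomputable def partialJac (F : (Fin M → ℝ) → (Fin M → ℝ)) (x : Fin M → ℝ) (j : Fin M) :
    Matrix (Fin M) (Fin M) ℝ :=
  of fun i k => grad (fun y => jac F y i k) x j

theorem grad_log_det_one_add_smul_jac_add_smul_vecMulVec {F : (Fin M → ℝ) → (Fin M → ℝ)}
    {σ : (Fin M → ℝ) → ℝ} {x : Fin M → ℝ}
    (hF : ∀ i k, DifferentiableAt ℝ (fun y => jac F y i k) x)
    (hσ : DifferentiableAt ℝ (grad σ) x) (w : Fin M → ℝ) (t s : ℝ)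
    (hdet : (1 + t • jac F x + s • vecMulVec w (grad σ x)).det ≠ 0) :
    grad (fun y => Real.log (1 + t • jac F y + s • vecMulVec w (grad σ y)).det) x =
      t • (fun j => trace ((1 + t • jac F x + s • vecMulVec w (grad σ x))⁻¹ * partialJac F x j))
      + s • ((jac (grad σ) x)ᵀ *ᵥ ((1 + t • jac F x + s • vecMulVec w (grad σ x))⁻¹ *ᵥ w)) := by
  have hentry : ∀ i k, HasFDerivAt (fun y => (1 + t • jac F y + s • vecMulVec w (grad σ y)) i k)
      (t • fderiv ℝ (fun y => jac F y i k) x + (s * w i) • fderiv ℝ (fun y => grad σ y k) x) x :=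
    fun i k => by
      refine ((((hF i k).hasFDerivAt.const_smul t).add
        ((differentiableAt_pi.1 hσ k).hasFDerivAt.const_smul (s * w i))).const_add
          ((1 : Matrix (Fin M) (Fin M) ℝ) i k)).congr_of_eventuallyEq (.of_forall fun y => ?_)
      simp [vecMulVec_apply, mul_assoc, add_assoc]
  have hpartial : ∀ j, (of fun i k =>
      grad (fun y => (1 + t • jac F y + s • vecMulVec w (grad σ y)) i k) x j) =
        t • partialJac F x j + s • vecMulVec w ((jac (grad σ) x)ᵀ j) := by
    intro j; ext i k
    rw [of_apply, grad, (hentry i k).fderiv]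
    simp [partialJac, grad, vecMulVec_apply, jac_apply_eq_grad hσ, mul_assoc]
  rw [grad_log_det (fun i k => (hentry i k).differentiableAt) hdet]
  funext j
  rw [hpartial, mul_add, mul_smul_comm, mul_smul_comm, trace_add, trace_smul, trace_smul,
    mul_vecMulVec, trace_vecMulVec, dotProduct_comm]
  rfl

end Gradient

/-- with `A = DF(x)` and `v = ∇σ(x)`,
`⟨∇ₓ log det(I + tA + √t w vᵀ), −(I + tA + √t w vᵀ)⁻¹(t p + √t c w)⟩
  = −t c ⟨∇²σ(x) w, w⟩ + o(t)` as `t → 0⁺`. -/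
theorem grad_logdet_dot_response_expansion (M : ℕ)
    (F : (Fin M → ℝ) → (Fin M → ℝ)) (σ : (Fin M → ℝ) → ℝ)
    (hF : ContDiff ℝ 2 F) (hσ : ContDiff ℝ 3 σ)
    (x w p : Fin M → ℝ) (c : ℝ) :
    Tendsto (fun t : ℝ =>
      ((grad (fun y => Real.log (((1 : Matrix (Fin M) (Fin M) ℝ)
            + t • jac F y + Real.sqrt t • vecMulVec w (grad σ y)).det)) x ⬝ᵥ
          (-(((1 : Matrix (Fin M) (Fin M) ℝ) + t • jac F x
              + Real.sqrt t • vecMulVec w (grad σ x))⁻¹ *ᵥ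
            (t • p + (Real.sqrt t * c) • w))))
        + t * c * ((jac (fun y => grad σ y) x *ᵥ w) ⬝ᵥ w)) / t)
      (nhdsWithin 0 (Set.Ioi 0)) (nhds 0) := by
  set N : ℝ → Matrix (Fin M) (Fin M) ℝ := fun s => 1 + s ^ 2 • jac F x + s • vecMulVec w (grad σ x)
  have hN : ContinuousAt N 0 := by fun_prop
  have hN0 : N 0 = 1 := by simp [N]
  have hsqrt : Tendsto Real.sqrt (𝓝[>] 0) (𝓝 0) := by
    simpa using Real.continuous_sqrt.tendsto 0 |>.mono_left nhdsWithin_le_nhds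
  have hdet : ∀ᶠ t in 𝓝[>] 0, (N √t).det ≠ 0 :=
    hsqrt.eventually ((continuous_id.matrix_det.continuousAt.comp hN).eventually_ne
      (by simp [hN0]))
  have hlim := tendsto_smul_add_mulVec_dotProduct hN hN0 (partialJac F x) (jac (grad σ) x) p w c
  have hdiff := (tendsto_const_nhds (x := c * (jac (grad σ) x *ᵥ w ⬝ᵥ w))).sub (hlim.comp hsqrt)
  rw [sub_self] at hdiff
  refine hdiff.congr' ?_
  filter_upwards [self_mem_nhdsWithin, hdet] with t ht hdet
  obtain ⟨s, hs, rfl⟩ : ∃ s > 0, t = s ^ 2 := ⟨√t, Real.sqrt_pos.2 ht, (Real.sq_sqrt ht.le).symm⟩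
  simp only [Function.comp, Real.sqrt_sq hs.le] at hdet ⊢
  rw [grad_log_det_one_add_smul_jac_add_smul_vecMulVec (differentiableAt_jac_apply hF x)
    (differentiableAt_grad (hσ.of_le (by norm_num)) x) w _ _ hdet,
    div_sq_eq_sub_smul_add_mulVec_dotProduct hs.ne']
end
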